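/- Let z1, z2, z3, z4 be four distinct points on the ideal boundary ℝ ∪ {∞} of the upper half-plane, arranged as vertices of an ideal quadrilateral, and choose pairwise disjoint horocycles centered at these points. For ideal points z_i, z_j, let λ_{ij} = exp(μ_{ij}/2) denote the lambda length, where μ_{ij} is the signed hyperbolic distance along the geodesic from z_i to z_j between its intersection points with the two horocycles. Then the cross ratio Y = ((z1−z2)(z3−z4))/((z2−z3)(z1−z4)) satisfies Y = (λ_{12} λ_{34})/(λ_{23} λ_{14}). In particular, the right-hand side is independent of the choice of horocycles. -/

import Mathlib

/-!
The geodesic from `p` to `q` meets the horocycle of diameter `a` at `p` in the explicit point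
`p + L a² / (a² + L²) + i L² a / (a² + L²)`, `L = q - p`. Plugging two such points into the
distance formula gives `sinh (μ / 2) = (L² - a b) / (2 |L| √(a b))`, and disjointness of the
horocycles means `a b ≤ L²`, so `μ / 2 = log (|L| / √(a b))`: the lambda length is
`λ = |q - p| / √(a b)` (Penner). In the ratio `λ₁₂ λ₃₄ / (λ₂₃ λ₁₄)` every `√(d i)` appears once
upstairs and once downstairs, leaving the cross ratio.
-/

open Complex

/-- The hyperbolic distance between two points of the upper half-plane (represented as
complex numbers with positive imaginary part), given by the standard formula
`d(u,v) = 2 arsinh(|u − v| / (2 √(Im u · Im v)))` for the metric `|dz|²/Im(z)²`. -/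
noncomputable def hypDist (u v : ℂ) : ℝ :=
  2 * Real.arsinh (‖u - v‖ / (2 * Real.sqrt (u.im * v.im)))

/-- The horocycle centered at the finite ideal point `p ∈ ℝ` with Euclidean diameter `d`:
the Euclidean circle in the upper half-plane tangent to `ℝ` at `p`. -/
noncomputable def horocycle (p d : ℝ) : Set ℂ :=
  Metric.sphere ((p : ℂ) + (d / 2) * Complex.I) (d / 2)

/-- The complete geodesic of the upper half-plane with ideal endpoints `p, q ∈ ℝ`:
the Euclidean semicircle over the segment `[p,q]`. -/
noncomputable def idealGeodesic (p q : ℝ) : Set ℂ :=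
  {w : ℂ | 0 < w.im ∧ ‖w - (((p + q) / 2 : ℝ) : ℂ)‖ = |p - q| / 2}

lemma mem_horocycle_iff {p a : ℝ} (ha : 0 ≤ a) (w : ℂ) :
    w ∈ horocycle p a ↔ (w.re - p) ^ 2 + w.im ^ 2 = a * w.im := by
  rw [horocycle, Metric.mem_sphere, Complex.dist_eq, ← Real.sqrt_sq (by positivity : 0 ≤ a / 2),
    Complex.norm_def, Real.sqrt_inj (Complex.normSq_nonneg _) (by positivity)]
  simp only [Complex.normSq_apply, Complex.sub_re, Complex.sub_im, Complex.add_re,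
    Complex.add_im, Complex.ofReal_re, Complex.ofReal_im, Complex.mul_re, Complex.mul_im,
    Complex.I_re, Complex.I_im, Complex.div_ofNat_re, Complex.div_ofNat_im]
  constructor <;> intro h <;> linarith

lemma mem_idealGeodesic_iff {p q : ℝ} (w : ℂ) :
    w ∈ idealGeodesic p q ↔ 0 < w.im ∧ (w.re - p) ^ 2 + w.im ^ 2 = (q - p) * (w.re - p) := by
  refine and_congr_right fun _ => ?_
  rw [← Real.sqrt_sq (by positivity : 0 ≤ |p - q| / 2), Complex.norm_def,
    Real.sqrt_inj (Complex.normSq_nonneg _) (by positivity)]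
  simp only [Complex.normSq_apply, Complex.sub_re, Complex.sub_im, Complex.ofReal_re,
    Complex.ofReal_im]
  rw [div_pow, sq_abs]
  constructor <;> intro h <;> linarith

noncomputable def geodesicHorocyclePoint (p q a : ℝ) : ℂ :=
  ⟨p + (q - p) * a ^ 2 / (a ^ 2 + (q - p) ^ 2), (q - p) ^ 2 * a / (a ^ 2 + (q - p) ^ 2)⟩

lemma geodesicHorocyclePoint_mem_horocycle {p q a : ℝ} (hpq : p ≠ q) (ha : 0 ≤ a) :
    geodesicHorocyclePoint p q a ∈ horocycle p a := by
  have : a ^ 2 + (q - p) ^ 2 ≠ 0 := by have := sub_ne_zero.2 hpq.symm; positivity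
  rw [mem_horocycle_iff ha, geodesicHorocyclePoint]
  field_simp
  ring

lemma eq_geodesicHorocyclePoint {p q a : ℝ} {u : ℂ} (hpq : p ≠ q) (ha : 0 < a)
    (hg : u ∈ idealGeodesic p q) (hh : u ∈ horocycle p a) :
    u = geodesicHorocyclePoint p q a := by
  rw [mem_idealGeodesic_iff] at hg
  rw [mem_horocycle_iff ha.le] at hh
  obtain ⟨him, hg⟩ := hg
  have hL : q - p ≠ 0 := sub_ne_zero.2 hpq.symm
  have hA : a ^ 2 + (q - p) ^ 2 ≠ 0 := by positivity
  -- with `X + iY = u - p` and `L = q - p` the two circles read `X² + Y² = L X = a Y`;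
  -- eliminating `X` and dividing by `Y > 0` leaves `Y (a² + L²) = a L²`
  have hX : u.re - p = a * u.im / (q - p) := by field_simp; linarith
  have hY : u.im = (q - p) ^ 2 * a / (a ^ 2 + (q - p) ^ 2) := by
    rw [hX] at hh
    field_simp at hh
    rw [eq_div_iff hA]
    linarith
  apply Complex.ext
  · simp only [geodesicHorocyclePoint]
    rw [eq_add_of_sub_eq' hX, hY]
    field_simp
  · exact hY

/-- Where the geodesic from `p` to `q` leaves the horocycle at `p`, it lies inside the horocycle
of diameter `b` at `q` unless `a * b ≤ (q - p) ^ 2`; the horocycle at `p` is connected and also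
passes through `p`, outside the one at `q`, so it then crosses the latter. -/
lemma mul_le_sq_of_disjoint_horocycle {p q a b : ℝ} (hpq : p ≠ q) (ha : 0 < a) (hb : 0 < b)
    (h : Disjoint (horocycle p a) (horocycle q b)) : a * b ≤ (q - p) ^ 2 := by
  by_contra! hlt
  have hL : q - p ≠ 0 := sub_ne_zero.2 hpq.symm
  have hA : 0 < a ^ 2 + (q - p) ^ 2 := by positivity
  let f : ℂ → ℝ := fun w => (w.re - q) ^ 2 + w.im ^ 2 - b * w.im
  have hf_point : f (geodesicHorocyclePoint p q a) < 0 := by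
    have : f (geodesicHorocyclePoint p q a)
        = (q - p) ^ 2 * ((q - p) ^ 2 - a * b) / (a ^ 2 + (q - p) ^ 2) := by
      simp only [f, geodesicHorocyclePoint]
      field_simp
      ring
    rw [this]
    exact div_neg_of_neg_of_pos (mul_neg_of_pos_of_neg (by positivity) (by linarith)) hA
  have hf_center : 0 < f p := by
    simpa [f] using sq_pos_of_ne_zero (sub_ne_zero.2 hpq)
  have hconn : IsPreconnected (horocycle p a) :=
    isPreconnected_sphere (by rw [Complex.rank_real_complex]; norm_num) _ _
  obtain ⟨w, hw, hfw⟩ := hconn.intermediate_value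
    (geodesicHorocyclePoint_mem_horocycle hpq ha.le)
    ((mem_horocycle_iff ha.le _).2 (by simp)) (by fun_prop) ⟨hf_point.le, hf_center.le⟩
  refine Set.disjoint_left.mp h hw ((mem_horocycle_iff hb.le w).2 ?_)
  simp only [f] at hfw
  linarith

lemma exp_half_hypDist_eq {u v : ℂ} {t : ℝ} (ht : 0 < t)
    (h : ‖u - v‖ / (2 * √(u.im * v.im)) = (t - t⁻¹) / 2) : Real.exp (hypDist u v / 2) = t := by
  rw [hypDist, mul_div_cancel_left₀ _ two_ne_zero, h, ← Real.sinh_log ht, Real.arsinh_sinh,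
    Real.exp_log ht]

lemma exp_half_hypDist_geodesicHorocyclePoint {p q a b : ℝ} (hpq : p ≠ q) (ha : 0 < a)
    (hb : 0 < b) (hab : a * b ≤ (q - p) ^ 2) :
    Real.exp (hypDist (geodesicHorocyclePoint p q a) (geodesicHorocyclePoint q p b) / 2)
      = |q - p| / √(a * b) := by
  set u := geodesicHorocyclePoint p q a
  set v := geodesicHorocyclePoint q p b
  set t := |q - p| / √(a * b) with ht_def
  have hL : q - p ≠ 0 := sub_ne_zero.2 hpq.symm
  have hA : 0 < a ^ 2 + (q - p) ^ 2 := by positivity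
  have hB : 0 < b ^ 2 + (q - p) ^ 2 := by positivity
  have hab0 : 0 < a * b := mul_pos ha hb
  have ht1 : 1 ≤ t := by
    rw [ht_def, one_le_div (Real.sqrt_pos.2 hab0), ← Real.sqrt_sq_eq_abs]
    exact Real.sqrt_le_sqrt hab
  have ht_sq : t ^ 2 = (q - p) ^ 2 / (a * b) := by
    rw [ht_def, div_pow, sq_abs, Real.sq_sqrt hab0.le]
  have him : u.im * v.im
      = (q - p) ^ 4 * (a * b) / ((a ^ 2 + (q - p) ^ 2) * (b ^ 2 + (q - p) ^ 2)) := by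
    simp only [u, v, geodesicHorocyclePoint]
    rw [show p - q = -(q - p) by ring]
    field_simp
  have hnorm : ‖u - v‖ ^ 2 = (q - p) ^ 2 * ((q - p) ^ 2 - a * b) ^ 2
      / ((a ^ 2 + (q - p) ^ 2) * (b ^ 2 + (q - p) ^ 2)) := by
    rw [Complex.sq_norm, Complex.normSq_apply]
    simp only [u, v, geodesicHorocyclePoint, Complex.sub_re, Complex.sub_im]
    rw [show p - q = -(q - p) by ring]
    field_simp
    ring
  have hrhs : ((t - t⁻¹) / 2) ^ 2 = ((q - p) ^ 2 - a * b) ^ 2 / (4 * (q - p) ^ 2 * (a * b)) := by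
    rw [div_pow, sub_sq t, mul_assoc, mul_inv_cancel₀ (by linarith), inv_pow, ht_sq]
    field_simp
    ring
  apply exp_half_hypDist_eq (by linarith)
  refine (pow_left_inj₀ (by positivity) ?_ two_ne_zero).1 ?_
  · have : t⁻¹ ≤ t := (inv_le_one_of_one_le₀ ht1).trans ht1
    linarith
  rw [hrhs, div_pow, mul_pow, Real.sq_sqrt (by rw [him]; positivity), hnorm, him]
  field_simp
  ring

lemma exp_half_hypDist_of_mem_horocycle {p q a b : ℝ} {u v : ℂ} (hpq : p ≠ q) (ha : 0 < a)
    (hb : 0 < b) (hdisj : Disjoint (horocycle p a) (horocycle q b))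
    (hug : u ∈ idealGeodesic p q) (huh : u ∈ horocycle p a)
    (hvg : v ∈ idealGeodesic q p) (hvh : v ∈ horocycle q b) :
    Real.exp (hypDist u v / 2) = |q - p| / √(a * b) := by
  rw [eq_geodesicHorocyclePoint hpq ha hug huh, eq_geodesicHorocyclePoint hpq.symm hb hvg hvh]
  exact exp_half_hypDist_geodesicHorocyclePoint hpq ha hb
    (mul_le_sq_of_disjoint_horocycle hpq ha hb hdisj)

/-- **Penner.** Let `z 0 < z 1 < z 2 < z 3` be four points on the ideal
boundary `ℝ` of the upper half-plane, vertices of an ideal quadrilateral, with pairwise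
disjoint horocycles of diameters `d i` centered at them.  For `i ≠ j` let `P i j` be the
intersection point of the geodesic from `z i` to `z j` with the horocycle at `z i`, let
`μ i j = hypDist (P i j) (P j i)` be the hyperbolic distance along the geodesic between
the two horocycles, and `λ_{ij} = exp(μ_{ij}/2)` the lambda length.  Then the cross ratio
`Y = ((z₁−z₂)(z₃−z₄))/((z₂−z₃)(z₁−z₄))` equals `(λ₁₂ λ₃₄)/(λ₂₃ λ₁₄)`.  In particular the
right-hand side is independent of the choice of horocycles. -/
theorem crossRatio_eq_lambdaLength_ratio
    (z : Fin 4 → ℝ) (hz : StrictMono z)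
    (d : Fin 4 → ℝ) (hd : ∀ i, 0 < d i)
    (hdisj : ∀ i j, i ≠ j → Disjoint (horocycle (z i) (d i)) (horocycle (z j) (d j)))
    (P : Fin 4 → Fin 4 → ℂ)
    (hPgeo : ∀ i j, i ≠ j → P i j ∈ idealGeodesic (z i) (z j))
    (hPhoro : ∀ i j, i ≠ j → P i j ∈ horocycle (z i) (d i))
    (μ : Fin 4 → Fin 4 → ℝ)
    (hμ : ∀ i j, i ≠ j → μ i j = hypDist (P i j) (P j i))
    (lam : Fin 4 → Fin 4 → ℝ)
    (hlam : ∀ i j, i ≠ j → lam i j = Real.exp (μ i j / 2)) :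
    ((z 0 - z 1) * (z 2 - z 3)) / ((z 1 - z 2) * (z 0 - z 3))
      = (lam 0 1 * lam 2 3) / (lam 1 2 * lam 0 3) := by
  have hlam_eq : ∀ i j, i < j → lam i j = (z j - z i) / (√(d i) * √(d j)) := by
    intro i j hij
    rw [hlam i j hij.ne, hμ i j hij.ne, exp_half_hypDist_of_mem_horocycle (hz hij).ne (hd i) (hd j)
      (hdisj i j hij.ne) (hPgeo i j hij.ne) (hPhoro i j hij.ne) (hPgeo j i hij.ne')
      (hPhoro j i hij.ne'), abs_of_pos (sub_pos.2 (hz hij)), Real.sqrt_mul (hd i).le]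
  have hsqrt : ∀ i, √(d i) ≠ 0 := fun i => (Real.sqrt_pos.2 (hd i)).ne'
  have h12 : z 1 < z 2 := hz (by decide)
  have h03 : z 0 < z 3 := hz (by decide)
  rw [hlam_eq 0 1 (by decide), hlam_eq 1 2 (by decide), hlam_eq 2 3 (by decide),
    hlam_eq 0 3 (by decide)]
  field_simp [hsqrt 0, hsqrt 1, hsqrt 2, hsqrt 3, sub_ne_zero.2 h12.ne, sub_ne_zero.2 h12.ne',
    sub_ne_zero.2 h03.ne, sub_ne_zero.2 h03.ne']
  ring
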